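/- Let A be an algebra of subsets of Ω and λ ∈ ba(A)₊. Let H ⊆ A, and let (Hₙ) be a sequence in H such that m = ∑ₙ αₙ λ_{Hₙ} (with αₙ > 0, ∑αₙ = 1) dominates {λ_H : H ∈ H}, where λ_H(A) = λ(A ∩ H). Then for every H ∈ H, lim_{k→∞} λ(H \ (H₁ ∪ ⋯ ∪ H_k)) = 0. -/

import Mathlib

open Set Filter Topology

variable {Ω : Type*}

/-- `𝒜` is an algebra of subsets of `Ω`. -/
def IsAlg (𝒜 : Set (Set Ω)) : Prop :=
  ∅ ∈ 𝒜 ∧ Set.univ ∈ 𝒜 ∧ (∀ A ∈ 𝒜, Aᶜ ∈ 𝒜) ∧ ∀ A ∈ 𝒜, ∀ B ∈ 𝒜, A ∪ B ∈ 𝒜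

/-- bounded finitely additive set function (element of ba(𝒜)). -/
def IsFinAdd (𝒜 : Set (Set Ω)) (μ : Set Ω → ℝ) : Prop :=
  μ ∅ = 0 ∧
  (∀ A ∈ 𝒜, ∀ B ∈ 𝒜, Disjoint A B → μ (A ∪ B) = μ A + μ B) ∧
  ∃ C : ℝ, ∀ A ∈ 𝒜, |μ A| ≤ C

def IsPos (𝒜 : Set (Set Ω)) (μ : Set Ω → ℝ) : Prop := ∀ A ∈ 𝒜, 0 ≤ μ A

def IsCtblAdd (𝒜 : Set (Set Ω)) (μ : Set Ω → ℝ) : Prop :=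
  ∀ A : ℕ → Set Ω, (∀ n, A n ∈ 𝒜) → Pairwise (Function.onFun Disjoint A) →
    (⋃ n, A n) ∈ 𝒜 → HasSum (fun n => μ (A n)) (μ (⋃ n, A n))

/-- total variation of `μ` on `A`. -/
noncomputable def tv (𝒜 : Set (Set Ω)) (μ : Set Ω → ℝ) (A : Set Ω) : ℝ :=
  sSup {x | ∃ B ∈ 𝒜, B ⊆ A ∧ x = μ B - μ (A \ B)}

noncomputable def tvNorm (𝒜 : Set (Set Ω)) (μ : Set Ω → ℝ) : ℝ := tv 𝒜 μ Set.univ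

/-- `ν ≪ μ`, absolute continuity in the ε-δ sense. -/
def AC (𝒜 : Set (Set Ω)) (ν μ : Set Ω → ℝ) : Prop :=
  ∀ ε > (0:ℝ), ∃ δ > (0:ℝ), ∀ E ∈ 𝒜, tv 𝒜 μ E < δ → tv 𝒜 ν E < ε

/-- `μ ⊥ ν`, singularity in the ε sense. -/
def Sing (𝒜 : Set (Set Ω)) (μ ν : Set Ω → ℝ) : Prop :=
  ∀ ε > (0:ℝ), ∃ B ∈ 𝒜, tv 𝒜 μ Bᶜ + tv 𝒜 ν B < ε

/-- normalized total variation `|μ|/(1 ∨ ‖μ‖)`. -/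
noncomputable def nvar (𝒜 : Set (Set Ω)) (μ : Set Ω → ℝ) (A : Set Ω) : ℝ :=
  tv 𝒜 μ A / (1 ⊔ tvNorm 𝒜 μ)

/-- membership in `𝐀(M)`: countable convex combinations of normalized variations. -/
def MemAM (𝒜 : Set (Set Ω)) (M : Set (Set Ω → ℝ)) (m : Set Ω → ℝ) : Prop :=
  ∃ (μ : ℕ → Set Ω → ℝ) (α : ℕ → ℝ),
    (∀ n, μ n ∈ M) ∧ (∀ n, 0 ≤ α n) ∧ HasSum α 1 ∧
    ∀ A : Set Ω, m A = ∑' n, α n * nvar 𝒜 (μ n) A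

/-- membership in `𝐋(M)`. -/
def MemLM (𝒜 : Set (Set Ω)) (M : Set (Set Ω → ℝ)) (ν : Set Ω → ℝ) : Prop :=
  ∃ m, MemAM 𝒜 M m ∧ AC 𝒜 ν m

/-- order on ba(𝒜). -/
def baLE (𝒜 : Set (Set Ω)) (μ ν : Set Ω → ℝ) : Prop := ∀ A ∈ 𝒜, μ A ≤ ν A

/-- λ-completion of 𝒜. -/
def Completion (𝒜 : Set (Set Ω)) (l : Set Ω → ℝ) : Set (Set Ω) :=
  {B | ∀ ε > (0:ℝ), ∃ A ∈ 𝒜, ∃ A' ∈ 𝒜, A ⊆ B ∧ B ⊆ A' ∧ l (A' \ A) < ε}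

/-- the extension `λ̄` to the completion. -/
noncomputable def extOf (𝒜 : Set (Set Ω)) (l : Set Ω → ℝ) (B : Set Ω) : ℝ :=
  sSup {x | ∃ A ∈ 𝒜, A ⊆ B ∧ x = l A}

/-- λ-atom. -/
def IsLAtom (𝒜 : Set (Set Ω)) (l : Set Ω → ℝ) (B : Set Ω) : Prop :=
  B ∈ 𝒜 ∧ 0 < l B ∧ ∀ A ∈ 𝒜, A ⊆ B → l A = 0 ∨ l (B \ A) = 0

/-- simple 𝒜-measurable function. -/
def IsSimple (𝒜 : Set (Set Ω)) (f : Ω → ℝ) : Prop :=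
  (Set.range f).Finite ∧ ∀ c : ℝ, f ⁻¹' {c} ∈ 𝒜

/-- integral of a simple function. -/
noncomputable def simpleInt (μ : Set Ω → ℝ) (f : Ω → ℝ) : ℝ :=
  ∑ᶠ c : ℝ, c * μ (f ⁻¹' {c})

/-- outer measure associated with l on 𝒜. -/
noncomputable def outerOf (𝒜 : Set (Set Ω)) (l : Set Ω → ℝ) (S : Set Ω) : ℝ :=
  sInf {x | ∃ A ∈ 𝒜, S ⊆ A ∧ x = l A}

/-- Dunford–Schwartz approximating sequence for `f`. -/
def ApproxSeq (𝒜 : Set (Set Ω)) (l : Set Ω → ℝ) (f : Ω → ℝ) (g : ℕ → Ω → ℝ) : Prop :=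
  (∀ n, IsSimple 𝒜 (g n)) ∧
  (∀ ε > (0:ℝ), ∃ N, ∀ p ≥ N, ∀ q ≥ N, simpleInt l (fun x => |g p x - g q x|) < ε) ∧
  (∀ ε > (0:ℝ), Tendsto (fun n => outerOf 𝒜 l {x | ε ≤ |g n x - f x|}) atTop (nhds 0))

/-- membership in L¹(l). -/
def MemL1 (𝒜 : Set (Set Ω)) (l : Set Ω → ℝ) (f : Ω → ℝ) : Prop :=
  ∃ g, ApproxSeq 𝒜 l f g

/-- the Dunford–Schwartz integral. -/
noncomputable def dsInt (𝒜 : Set (Set Ω)) (l : Set Ω → ℝ) (f : Ω → ℝ) : ℝ :=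
  sInf {I | ∃ g, ApproxSeq 𝒜 l f g ∧ Tendsto (fun n => simpleInt l (g n)) atTop (nhds I)}

/-- L¹ seminorm distance. -/
noncomputable def l1dist (𝒜 : Set (Set Ω)) (l : Set Ω → ℝ) (f h : Ω → ℝ) : ℝ :=
  dsInt 𝒜 l (fun x => |f x - h x|)

/-- membership in the L¹(l)-closure of a set C of functions. -/
def InL1Closure (𝒜 : Set (Set Ω)) (l : Set Ω → ℝ) (C : Set (Ω → ℝ)) (f : Ω → ℝ) : Prop :=
  ∀ ε > (0:ℝ), ∃ h ∈ C, l1dist 𝒜 l f h < ε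

/-- the set C = K − Sim(𝒜)₊. -/
def ConeDiff (𝒜 : Set (Set Ω)) (K : Set (Ω → ℝ)) : Set (Ω → ℝ) :=
  {f | ∃ k ∈ K, ∃ s : Ω → ℝ, IsSimple 𝒜 s ∧ (∀ x, 0 ≤ s x) ∧ f = k - s}

/-!
Write `Eₖ = H \ (H₀ ∪ ⋯ ∪ Hₖ)`. The first `k + 1` terms of `m(Eₖ) = ∑ αₙ λ(Eₖ ∩ Hₙ)` vanish,
so `m(Eₖ) ≤ sup λ · ∑_{n > k} αₙ → 0`. Since `m` is positive and monotone, its variation on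
`Eₖ` is at most `m(Eₖ)`, so domination makes the variation of `λ_H` on `Eₖ` small, and this
variation bounds `λ_H(Eₖ) = λ(Eₖ)`.
-/

namespace IsAlg

variable {𝒜 : Set (Set Ω)}

theorem inter_mem (h𝒜 : IsAlg 𝒜) {A B : Set Ω} (hA : A ∈ 𝒜) (hB : B ∈ 𝒜) : A ∩ B ∈ 𝒜 := by
  simpa [compl_union] using h𝒜.2.2.1 _ (h𝒜.2.2.2 _ (h𝒜.2.2.1 A hA) _ (h𝒜.2.2.1 B hB))

theorem diff_mem (h𝒜 : IsAlg 𝒜) {A B : Set Ω} (hA : A ∈ 𝒜) (hB : B ∈ 𝒜) : A \ B ∈ 𝒜 :=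
  h𝒜.inter_mem hA (h𝒜.2.2.1 B hB)

theorem biUnion_finset_mem (h𝒜 : IsAlg 𝒜) {H : ℕ → Set Ω} (hH : ∀ n, H n ∈ 𝒜) (s : Finset ℕ) :
    (⋃ n ∈ s, H n) ∈ 𝒜 := by
  induction s using Finset.induction_on with
  | empty => simpa using h𝒜.1
  | insert a s _ ih =>
    rw [Finset.set_biUnion_insert]
    exact h𝒜.2.2.2 _ (hH a) _ ih

end IsAlg

section Variation

variable {𝒜 : Set (Set Ω)} {μ : Set Ω → ℝ} {G : Set Ω}

theorem IsFinAdd.mono (hμ : IsFinAdd 𝒜 μ) (hpos : IsPos 𝒜 μ) (h𝒜 : IsAlg 𝒜) {A B : Set Ω}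
    (hA : A ∈ 𝒜) (hB : B ∈ 𝒜) (hAB : A ⊆ B) : μ A ≤ μ B := by
  have hBA := h𝒜.diff_mem hB hA
  have hsplit := hμ.2.1 A hA (B \ A) hBA disjoint_sdiff_self_right
  rw [union_sdiff_cancel hAB] at hsplit
  linarith [hpos _ hBA]

theorem IsFinAdd.restrict (hμ : IsFinAdd 𝒜 μ) (h𝒜 : IsAlg 𝒜) {H : Set Ω} (hH : H ∈ 𝒜) :
    IsFinAdd 𝒜 (fun A => μ (A ∩ H)) := by
  obtain ⟨hμ0, hadd, C, hC⟩ := hμ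
  refine ⟨by simpa using hμ0, fun A hA B hB hAB => ?_, C, fun A hA => hC _ (h𝒜.inter_mem hA hH)⟩
  simp only [union_inter_distrib_right]
  exact hadd _ (h𝒜.inter_mem hA hH) _ (h𝒜.inter_mem hB hH)
    (hAB.mono inter_subset_left inter_subset_left)

theorem abs_le_tv (h𝒜 : IsAlg 𝒜) (hμ : IsFinAdd 𝒜 μ) (hG : G ∈ 𝒜) : |μ G| ≤ tv 𝒜 μ G := by
  obtain ⟨hμ0, -, C, hC⟩ := hμ
  have hbdd : BddAbove {x | ∃ B ∈ 𝒜, B ⊆ G ∧ x = μ B - μ (G \ B)} := by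
    refine ⟨C + C, ?_⟩
    rintro x ⟨B, hB, -, rfl⟩
    linarith [le_abs_self (μ B), neg_abs_le (μ (G \ B)), hC B hB, hC _ (h𝒜.diff_mem hG hB)]
  rcases abs_cases (μ G) with ⟨hG_eq, -⟩ | ⟨hG_eq, -⟩ <;> rw [hG_eq]
  · exact le_csSup hbdd ⟨G, hG, subset_rfl, by simp [hμ0]⟩
  · exact le_csSup hbdd ⟨∅, h𝒜.1, empty_subset G, by simp [hμ0]⟩

theorem tv_le_of_mono (h𝒜 : IsAlg 𝒜) (hpos : IsPos 𝒜 μ)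
    (hmono : ∀ A ∈ 𝒜, ∀ B ∈ 𝒜, A ⊆ B → μ A ≤ μ B) (hG : G ∈ 𝒜) : tv 𝒜 μ G ≤ μ G := by
  refine csSup_le ⟨_, G, hG, subset_rfl, rfl⟩ ?_
  rintro x ⟨B, hB, hBG, rfl⟩
  linarith [hmono B hB G hG hBG, hpos _ (h𝒜.diff_mem hG hB)]

theorem AC.eventually_tv_lt {ν : Set Ω → ℝ} (h : AC 𝒜 ν μ) {ι : Type*} {L : Filter ι}
    {E : ι → Set Ω} (hE : ∀ i, E i ∈ 𝒜) (hμ : ∀ δ > 0, ∀ᶠ i in L, tv 𝒜 μ (E i) < δ) :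
    ∀ ε > 0, ∀ᶠ i in L, tv 𝒜 ν (E i) < ε := by
  intro ε hε
  obtain ⟨δ, hδ, hνδ⟩ := h ε hε
  exact (hμ δ hδ).mono fun i hi => hνδ (E i) (hE i) hi

end Variation

theorem tsum_le_mul_tsum_nat_add {f g : ℕ → ℝ} {C : ℝ} {N : ℕ} (hg : Summable g)
    (hf0 : ∀ n, 0 ≤ f n) (hfg : ∀ n, f n ≤ C * g n) (hzero : ∀ n < N, f n = 0) :
    ∑' n, f n ≤ C * ∑' n, g (n + N) := by
  have hf : Summable f := (hg.mul_left C).of_nonneg_of_le hf0 hfg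
  rw [← hf.sum_add_tsum_nat_add N, Finset.sum_eq_zero fun n hn => hzero n (Finset.mem_range.1 hn),
    zero_add, ← tsum_mul_left]
  exact ((summable_nat_add_iff N).2 hf).tsum_le_tsum (fun n => hfg _)
    ((summable_nat_add_iff N).2 (hg.mul_left C))

noncomputable def restrictMixture (α : ℕ → ℝ) (l : Set Ω → ℝ) (Hs : ℕ → Set Ω) (A : Set Ω) : ℝ :=
  ∑' n, α n * l (A ∩ Hs n)

namespace restrictMixture

variable {𝒜 : Set (Set Ω)} {l : Set Ω → ℝ} {α : ℕ → ℝ} {Hs : ℕ → Set Ω}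

theorem term_nonneg (h𝒜 : IsAlg 𝒜) (hpos : IsPos 𝒜 l) (hα : ∀ n, 0 ≤ α n)
    (hHs : ∀ n, Hs n ∈ 𝒜) {A : Set Ω} (hA : A ∈ 𝒜) (n : ℕ) : 0 ≤ α n * l (A ∩ Hs n) :=
  mul_nonneg (hα n) (hpos _ (h𝒜.inter_mem hA (hHs n)))

theorem exists_term_le (h𝒜 : IsAlg 𝒜) (hl : IsFinAdd 𝒜 l) (hα : ∀ n, 0 ≤ α n)
    (hHs : ∀ n, Hs n ∈ 𝒜) : ∃ C, ∀ A ∈ 𝒜, ∀ n, α n * l (A ∩ Hs n) ≤ C * α n := by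
  obtain ⟨C, hC⟩ := hl.2.2
  refine ⟨C, fun A hA n => ?_⟩
  rw [mul_comm C]
  exact mul_le_mul_of_nonneg_left ((le_abs_self _).trans (hC _ (h𝒜.inter_mem hA (hHs n)))) (hα n)

theorem summable (h𝒜 : IsAlg 𝒜) (hl : IsFinAdd 𝒜 l) (hpos : IsPos 𝒜 l) (hα : ∀ n, 0 ≤ α n)
    (hαs : Summable α) (hHs : ∀ n, Hs n ∈ 𝒜) {A : Set Ω} (hA : A ∈ 𝒜) :
    Summable fun n => α n * l (A ∩ Hs n) := by
  obtain ⟨C, hC⟩ := exists_term_le h𝒜 hl hα hHs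
  exact (hαs.mul_left C).of_nonneg_of_le (term_nonneg h𝒜 hpos hα hHs hA) (hC A hA)

theorem isPos (h𝒜 : IsAlg 𝒜) (hpos : IsPos 𝒜 l) (hα : ∀ n, 0 ≤ α n) (hHs : ∀ n, Hs n ∈ 𝒜) :
    IsPos 𝒜 (restrictMixture α l Hs) :=
  fun _ hA => tsum_nonneg (term_nonneg h𝒜 hpos hα hHs hA)

theorem mono (h𝒜 : IsAlg 𝒜) (hl : IsFinAdd 𝒜 l) (hpos : IsPos 𝒜 l) (hα : ∀ n, 0 ≤ α n)
    (hαs : Summable α) (hHs : ∀ n, Hs n ∈ 𝒜) :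
    ∀ A ∈ 𝒜, ∀ B ∈ 𝒜, A ⊆ B → restrictMixture α l Hs A ≤ restrictMixture α l Hs B := by
  intro A hA B hB hAB
  refine (summable h𝒜 hl hpos hα hαs hHs hA).tsum_le_tsum (fun n => ?_)
    (summable h𝒜 hl hpos hα hαs hHs hB)
  exact mul_le_mul_of_nonneg_left (hl.mono hpos h𝒜 (h𝒜.inter_mem hA (hHs n))
    (h𝒜.inter_mem hB (hHs n)) (inter_subset_inter_left _ hAB)) (hα n)

theorem tendsto_diff_biUnion_range (h𝒜 : IsAlg 𝒜) (hl : IsFinAdd 𝒜 l) (hpos : IsPos 𝒜 l)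
    (hα : ∀ n, 0 ≤ α n) (hαs : Summable α) (hHs : ∀ n, Hs n ∈ 𝒜) {A : Set Ω} (hA : A ∈ 𝒜) :
    Tendsto (fun k => restrictMixture α l Hs (A \ ⋃ n ∈ Finset.range k, Hs n)) atTop (𝓝 0) := by
  obtain ⟨C, hC⟩ := exists_term_le h𝒜 hl hα hHs
  have hEA k : A \ ⋃ n ∈ Finset.range k, Hs n ∈ 𝒜 :=
    h𝒜.diff_mem hA (h𝒜.biUnion_finset_mem hHs _)
  have hbound k : restrictMixture α l Hs (A \ ⋃ n ∈ Finset.range k, Hs n) ≤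
      C * ∑' n, α (n + k) := by
    refine tsum_le_mul_tsum_nat_add hαs (term_nonneg h𝒜 hpos hα hHs (hEA k)) (hC _ (hEA k))
      fun n hn => ?_
    have hdisj : (A \ ⋃ n ∈ Finset.range k, Hs n) ∩ Hs n = ∅ :=
      eq_empty_of_forall_notMem fun x hx =>
        hx.1.2 (mem_biUnion (Finset.mem_range.2 hn) hx.2)
    rw [hdisj, hl.1, mul_zero]
  refine squeeze_zero (fun k => isPos h𝒜 hpos hα hHs _ (hEA k)) hbound ?_
  simpa using (tendsto_sum_nat_add α).const_mul C

end restrictMixture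

/-- if m = ∑ αₙ λ_{Hₙ} dominates {λ_H : H ∈ ℋ}, then
λ(H \ (H₁ ∪ ⋯ ∪ H_k)) → 0 for every H ∈ ℋ. -/
theorem restricted_domination {Ω : Type*} (𝒜 : Set (Set Ω)) (hA : IsAlg 𝒜)
    (l : Set Ω → ℝ) (hl : IsFinAdd 𝒜 l) (hpos : IsPos 𝒜 l)
    (H : Set (Set Ω)) (hH : H ⊆ 𝒜)
    (Hseq : ℕ → Set Ω) (hHseq : ∀ n, Hseq n ∈ H)
    (α : ℕ → ℝ) (hα : ∀ n, 0 < α n) (hsum : HasSum α 1)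
    (m : Set Ω → ℝ) (hm : ∀ A : Set Ω, m A = ∑' n : ℕ, α n * l (A ∩ Hseq n))
    (hdom : ∀ H' ∈ H, AC 𝒜 (fun A => l (A ∩ H')) m) :
    ∀ H' ∈ H, Filter.Tendsto
      (fun k => l (H' \ ⋃ n ∈ Finset.range (k + 1), Hseq n))
      Filter.atTop (nhds 0) := by
  intro H' hH'
  obtain rfl : m = restrictMixture α l Hseq := funext hm
  have hα0 n := (hα n).le
  have hHs n := hH (hHseq n)
  set E := fun k => H' \ ⋃ n ∈ Finset.range (k + 1), Hseq n
  have hEA k : E k ∈ 𝒜 := hA.diff_mem (hH hH') (hA.biUnion_finset_mem hHs _)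
  have hmE : Tendsto (fun k => restrictMixture α l Hseq (E k)) atTop (𝓝 0) :=
    (restrictMixture.tendsto_diff_biUnion_range hA hl hpos hα0 hsum.summable hHs (hH hH')).comp
      (tendsto_add_atTop_nat 1)
  have hlE k : l (E k) ≤ tv 𝒜 (fun A => l (A ∩ H')) (E k) := by
    have := (le_abs_self _).trans (abs_le_tv hA (hl.restrict hA (hH hH')) (hEA k))
    rwa [inter_eq_left.2 sdiff_subset] at this
  have hmE_small : ∀ δ > 0, ∀ᶠ k in atTop, tv 𝒜 (restrictMixture α l Hseq) (E k) < δ :=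
    fun δ hδ => ((tendsto_order.1 hmE).2 δ hδ).mono fun k hk =>
      (tv_le_of_mono hA (restrictMixture.isPos hA hpos hα0 hHs)
        (restrictMixture.mono hA hl hpos hα0 hsum.summable hHs) (hEA k)).trans_lt hk
  have hνE_small := (hdom H' hH').eventually_tv_lt hEA hmE_small
  exact tendsto_order.2 ⟨fun a ha => Eventually.of_forall fun k => ha.trans_le (hpos _ (hEA k)),
    fun ε hε => (hνE_small ε hε).mono fun k hk => (hlE k).trans_lt hk⟩
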